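/- Nonstandard characterization of uniform convergence (the condition distinguishing Cauchy's 1853 sum theorem from pointwise convergence): let F : ℕ → ℝ → ℝ be a sequence of functions and f : ℝ → ℝ. Then F tends to f uniformly on ℝ (TendstoUniformly F f atTop) if and only if for every hypernatural N : Filter.Germ (Filter.hyperfilter ℕ) ℕ that is infinite (i.e. (m : Filter.Germ (Filter.hyperfilter ℕ) ℕ) < N for every natural number m) and every hyperreal x, the hyperreal Filter.Germ.map₂ F N x − (Filter.Germ.map f) x is infinitesimal. -/

import Mathlib

/-!
Representing a hypernatural by a sequence `n` and a hyperreal by a sequence `u`, the right-hand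
side says that `F (n k) (u k) - f (u k) → 0` along the hyperfilter whenever `n k → ∞` there.
Uniform convergence gives this at once. Conversely, if convergence is not uniform, some `ε`
admits for every `k` an index `n k ≥ k` and a point `u k` with error at least `ε`; the
corresponding hypernatural is infinite, and the error at the corresponding hyperreal is not
infinitesimal.
-/

open Filter Uniformity

theorem Filter.Germ.forall_const_lt_iff_tendsto_atTop {α β : Type*} {φ : Ultrafilter α}
    [Preorder β] [NoMaxOrder β] (x : (φ : Filter α).Germ β) :
    (∀ b : β, (b : (φ : Filter α).Germ β) < x) ↔ x.Tendsto atTop := by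
  induction x using Germ.inductionOn with | h g =>
  exact ⟨fun h => tendsto_atTop.2 fun b => (Germ.coe_lt.1 (h b)).mono fun _ => le_of_lt,
    fun h b => Germ.coe_lt.2 (h.eventually_gt_atTop b)⟩

theorem tendstoUniformly_atTop_iff_seq {α β : Type*} [UniformSpace β] {F : ℕ → α → β}
    {f : α → β} {l : Filter ℕ} [l.NeBot] (hl : l ≤ atTop) :
    TendstoUniformly F f atTop ↔ ∀ (n : ℕ → ℕ) (u : ℕ → α), Tendsto n l atTop →
      Tendsto (fun k => (f (u k), F (n k) (u k))) l (𝓤 β) := by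
  refine ⟨fun h n u hn => ?_, fun h U hU => ?_⟩
  · exact (tendstoUniformly_iff_tendsto.1 h).comp (hn.prodMk tendsto_top)
  · by_contra hbad
    have bad_beyond : ∀ k, ∃ m ≥ k, ∃ x, (f x, F m x) ∉ U := by
      simpa only [not_forall] using frequently_atTop.1 (not_eventually.1 hbad)
    choose n hn u hu using bad_beyond
    have hn_tendsto : Tendsto n l atTop := (tendsto_atTop_mono hn tendsto_id).mono_left hl
    obtain ⟨k, hk⟩ := ((h n u hn_tendsto).eventually_mem hU).exists
    exact hu k hk

set_option linter.deprecated false in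
theorem tendstoUniformly_iff_infinitesimal (F : ℕ → ℝ → ℝ) (f : ℝ → ℝ) :
    TendstoUniformly F f Filter.atTop ↔
      ∀ N : Filter.Germ (Filter.hyperfilter ℕ : Filter ℕ) ℕ,
        (∀ m : ℕ, (m : Filter.Germ (Filter.hyperfilter ℕ : Filter ℕ) ℕ) < N) →
        ∀ x : ℝ*,
          Hyperreal.Infinitesimal (Filter.Germ.map₂ F N x - Filter.Germ.map f x) := by
  simp_rw [tendstoUniformly_atTop_iff_seq Nat.hyperfilter_le_atTop,
    uniformity_eq_comap_nhds_zero ℝ, tendsto_comap_iff]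
  -- `Infinitesimal` unfolds to `IsSt · 0`, and the germ operations compute termwise by `rfl`.
  refine ⟨fun h N hN x => ?_, fun h n u hn => ?_⟩
  · induction N using Germ.inductionOn with | h n =>
    induction x using Germ.inductionOn with | h u =>
    exact Hyperreal.isSt_iff_tendsto.2
      (h n u ((Germ.forall_const_lt_iff_tendsto_atTop _).1 hN))
  · exact Hyperreal.isSt_iff_tendsto.1
      (h n ((Germ.forall_const_lt_iff_tendsto_atTop _).2 hn) (Hyperreal.ofSeq u))
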